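/- arXiv:0901.2317 — 2 statements merged into one kernel-verified Lean document; each statement's English description precedes it below -/
import Mathlib

section
/- Let ∂ be a ℤ-linear map from chains on S to chains on T, and let B be a subchain of a chain A which is not a component of A. Then there exists a subchain C of A − B with ‖C‖ = 1 such that ‖∂(B + C)‖ < ‖∂B‖ + ‖∂C‖, and B + C is again a subchain of A. -/
/-- The volume of a chain `A : S →₀ ℤ`: the sum of the absolute values of its
coefficients. -/
def vol {S : Type*} (A : S →₀ ℤ) : ℕ := ∑ s ∈ A.support, (A s).natAbs

/-- `B` is a subchain of `A` when `‖A‖ = ‖B‖ + ‖A - B‖`. -/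
def Subchain {S : Type*} (B A : S →₀ ℤ) : Prop := vol A = vol B + vol (A - B)

/-- Given a boundary map `d`, `B` is a component of `A` if `B` is a subchain of `A`
and `d B` is a subchain of `d A`. -/
def Component {S T : Type*} (d : (S →₀ ℤ) →ₗ[ℤ] (T →₀ ℤ)) (B A : S →₀ ℤ) : Prop :=
  Subchain B A ∧ Subchain (d B) (d A)

/-!
Failure of `∂B ⊑ ∂A` is witnessed by one coordinate `t` where `∂B t` and `∂(A - B) t` have
strictly opposite signs. Expanding `∂(A - B) t` over the cells of `A - B` as
`∑ₛ |(A - B) s| · ∂(sign((A - B) s) • eₛ) t`, some summand must have the sign opposite to `∂B t`;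
the unit cell `C = sign((A - B) s) • eₛ` then cancels against `∂B` at `t`. Since `vol` satisfies
the triangle inequality, `B ⊑ A` and `C ⊑ A - B` force `B + C ⊑ A`.
-/

theorem Int.natAbs_add_lt_iff_mul_neg (a b : ℤ) :
    (a + b).natAbs < a.natAbs + b.natAbs ↔ a * b < 0 := by
  rw [mul_neg_iff]
  omega

section Chain

variable {S : Type*}

theorem vol_eq_sum_of_support_subset (A : S →₀ ℤ) {F : Finset S} (h : A.support ⊆ F) :
    vol A = ∑ s ∈ F, (A s).natAbs :=
  Finset.sum_subset h fun s _ hs => by simp [Finsupp.notMem_support_iff.mp hs]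

theorem vol_single (s : S) (a : ℤ) : vol (Finsupp.single s a) = a.natAbs := by
  classical
  rw [vol_eq_sum_of_support_subset _ Finsupp.support_single_subset, Finset.sum_singleton,
    Finsupp.single_eq_same]

theorem vol_add_le (X Y : S →₀ ℤ) : vol (X + Y) ≤ vol X + vol Y := by
  classical
  rw [vol_eq_sum_of_support_subset _ Finsupp.support_add,
    vol_eq_sum_of_support_subset X Finset.subset_union_left,
    vol_eq_sum_of_support_subset Y Finset.subset_union_right, ← Finset.sum_add_distrib]
  exact Finset.sum_le_sum fun s _ => Int.natAbs_add_le _ _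

theorem vol_add_lt_iff (X Y : S →₀ ℤ) :
    vol (X + Y) < vol X + vol Y ↔ ∃ t, X t * Y t < 0 := by
  classical
  rw [vol_eq_sum_of_support_subset _ Finsupp.support_add,
    vol_eq_sum_of_support_subset X Finset.subset_union_left,
    vol_eq_sum_of_support_subset Y Finset.subset_union_right, ← Finset.sum_add_distrib]
  constructor
  · intro h
    obtain ⟨t, -, ht⟩ := Finset.exists_lt_of_sum_lt h
    exact ⟨t, (Int.natAbs_add_lt_iff_mul_neg _ _).1 ht⟩
  · rintro ⟨t, ht⟩
    have htX : t ∈ X.support := Finsupp.mem_support_iff.2 (left_ne_zero_of_mul ht.ne)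
    refine Finset.sum_lt_sum (fun s _ => Int.natAbs_add_le _ _)
      ⟨t, Finset.mem_union_left _ htX, (Int.natAbs_add_lt_iff_mul_neg _ _).2 ht⟩

theorem subchain_iff_forall_mul_nonneg (B A : S →₀ ℤ) :
    Subchain B A ↔ ∀ s, 0 ≤ B s * (A s - B s) := by
  have hle := vol_add_le B (A - B)
  have hlt := vol_add_lt_iff B (A - B)
  rw [add_sub_cancel] at hle hlt
  rw [Subchain, ← hle.not_lt_iff_eq, hlt]
  simp

theorem Subchain.add {A B C : S →₀ ℤ} (hB : Subchain B A) (hC : Subchain C (A - B)) :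
    Subchain (B + C) A := by
  refine le_antisymm ?_ ?_
  · calc vol A = vol ((B + C) + (A - (B + C))) := by rw [add_sub_cancel]
      _ ≤ vol (B + C) + vol (A - (B + C)) := vol_add_le _ _
  · calc vol (B + C) + vol (A - (B + C)) ≤ vol B + (vol C + vol (A - B - C)) := by
          rw [sub_add_eq_sub_sub, ← add_assoc]; gcongr; exact vol_add_le _ _
      _ = vol A := by rw [← hC, ← hB]

theorem subchain_single_sign (R : S →₀ ℤ) (s : S) :
    Subchain (Finsupp.single s (R s).sign) R := by
  classical
  rw [subchain_iff_forall_mul_nonneg]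
  intro s'
  rcases eq_or_ne s s' with rfl | hne
  · rw [Finsupp.single_eq_same]
    rcases lt_trichotomy (R s) 0 with h | h | h
    · rw [Int.sign_eq_neg_one_of_neg h]; nlinarith
    · simp [h]
    · rw [Int.sign_eq_one_of_pos h]; nlinarith
  · rw [Finsupp.single_eq_of_ne hne.symm]; simp

end Chain

theorem exists_mem_support_mul_apply_single_sign_neg {S T : Type*}
    (d : (S →₀ ℤ) →ₗ[ℤ] (T →₀ ℤ)) (R : S →₀ ℤ) {t : T} {x : ℤ} (h : x * d R t < 0) :
    ∃ s ∈ R.support, x * d (Finsupp.single s (R s).sign) t < 0 := by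
  have hR : d R t = ∑ s ∈ R.support, (R s).natAbs * d (Finsupp.single s (R s).sign) t := by
    conv_lhs => rw [← Finsupp.sum_single R]
    simp only [Finsupp.sum, map_sum, Finsupp.finsetSum_apply]
    refine Finset.sum_congr rfl fun s _ => ?_
    conv_lhs => rw [← Int.sign_mul_natAbs (R s), mul_comm, ← smul_eq_mul, ← Finsupp.smul_single,
      map_smul, Finsupp.smul_apply, smul_eq_mul]
  rw [hR, Finset.mul_sum] at h
  obtain ⟨s, hs, hneg⟩ := Finset.exists_lt_of_sum_lt (h.trans_eq Finset.sum_const_zero.symm)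
  refine ⟨s, hs, ?_⟩
  rw [mul_left_comm] at hneg
  exact Left.neg_of_mul_neg_right hneg (Int.natCast_nonneg _)

/-- If `B` is a subchain of `A` but not a component of `A`, then some volume-one
subchain `C` of `A - B` strictly lowers the boundary volume when added to `B`,
and `B + C` is again a subchain of `A`. -/
theorem exists_growth_cell {S T : Type*} (d : (S →₀ ℤ) →ₗ[ℤ] (T →₀ ℤ))
    (A B : S →₀ ℤ) (hsub : Subchain B A) (hnotcomp : ¬ Component d B A) :
    ∃ C : S →₀ ℤ, Subchain C (A - B) ∧ vol C = 1 ∧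
      vol (d (B + C)) < vol (d B) + vol (d C) ∧ Subchain (B + C) A := by
  obtain ⟨t, ht⟩ : ∃ t, d B t * d (A - B) t < 0 := by
    have hd : ¬ Subchain (d B) (d A) := fun h => hnotcomp ⟨hsub, h⟩
    simpa [subchain_iff_forall_mul_nonneg, map_sub] using hd
  obtain ⟨s, hs, hC⟩ := exists_mem_support_mul_apply_single_sign_neg d (A - B) ht
  have hCsub := subchain_single_sign (A - B) s
  refine ⟨_, hCsub, ?_, ?_, hsub.add hCsub⟩
  · rw [vol_single, Int.natAbs_sign_of_ne_zero (Finsupp.mem_support_iff.1 hs)]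
  · rw [map_add]
    exact (vol_add_lt_iff _ _).2 ⟨t, hC⟩
end

section
/- Let a group G act on S and on T, and let ∂ be a G-equivariant ℤ-linear map from chains on S to chains on T. Assume the action of G on S has finitely many orbits, and that for every t ∈ T the set { s ∈ S : t lies in the support of ∂δ_s } is finite. Then for every n ∈ ℕ there is a finite set 𝒜 of connected chains such that every connected chain A with ‖A‖ ≤ n equals g • A₀ for some g ∈ G and A₀ ∈ 𝒜; that is, up to the G-action there are only finitely many connected chains of volume at most n. -/
/-- A chain is connected if its only components are `0` and itself. -/
def Connected {S T : Type*} (d : (S →₀ ℤ) →ₗ[ℤ] (T →₀ ℤ)) (A : S →₀ ℤ) : Prop :=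
  ∀ B : S →₀ ℤ, Component d B A → B = 0 ∨ B = A

/-- The action of a group element on chains induced by relabeling indices. -/
noncomputable def chainSMul {G S : Type*} [SMul G S] (g : G) (A : S →₀ ℤ) : S →₀ ℤ :=
  Finsupp.mapDomain (fun s => g • s) A


/-! A connected chain has connected support for the relation "`∂δ_s` and `∂δ_s'` share a cell".
Translating one cell of `A` into a fixed finite set `Σ` of orbit representatives therefore puts
the whole support within `‖A‖` steps of `Σ`; by local finiteness only finitely many cells are
that close, and chains supported on them with coefficients bounded by `n` are finitely many. -/

open Finset Finsupp

section Volume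

variable {S : Type*}

lemma natAbs_le_vol (A : S →₀ ℤ) (s : S) : (A s).natAbs ≤ vol A := by
  by_cases hs : s ∈ A.support
  · exact single_le_sum (f := fun s => (A s).natAbs) (fun _ _ => Nat.zero_le _) hs
  · simp [notMem_support_iff.mp hs]

lemma card_support_le_vol (A : S →₀ ℤ) : #A.support ≤ vol A :=
  card_eq_sum_ones A.support ▸
    sum_le_sum fun _ hs => Int.natAbs_pos.mpr (mem_support_iff.mp hs)

lemma vol_add_of_disjoint {B C : S →₀ ℤ} (h : Disjoint B.support C.support) :
    vol (B + C) = vol B + vol C :=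
  sum_add_index_of_disjoint h fun _ a => a.natAbs

lemma subchain_add_of_disjoint {B C : S →₀ ℤ} (h : Disjoint B.support C.support) :
    Subchain B (B + C) := by
  rw [Subchain, add_sub_cancel_left, vol_add_of_disjoint h]

lemma mem_finsupp_Icc_of_vol_le {K : Finset S} {A : S →₀ ℤ} {n : ℕ} (hK : A.support ⊆ K)
    (hvol : vol A ≤ n) : A ∈ K.finsupp fun _ => Icc (-n : ℤ) n := by
  refine mem_finsupp_iff.mpr ⟨hK, fun s _ => mem_Icc.mpr ?_⟩
  have := natAbs_le_vol A s
  omega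

end Volume

lemma Finset.exists_le_card_succ_eq_of_monotone {α : Type*} {f : ℕ → Finset α} (hf : Monotone f)
    {K : Finset α} (hK : ∀ k, f k ⊆ K) : ∃ k ≤ #K, f (k + 1) = f k := by
  by_contra! h
  have hgrow : ∀ k ≤ #K + 1, k ≤ #(f k) := by
    intro k
    induction k with
    | zero => simp
    | succ k ih =>
      intro hk
      have := card_lt_card ((hf (Nat.le_add_right k 1)).ssubset_of_ne (h k (by omega)).symm)
      omega
  have := card_le_card (hK (#K + 1))
  have := hgrow (#K + 1) le_rfl
  omega

section Overlap

variable {S T : Type*} (d : (S →₀ ℤ) →ₗ[ℤ] (T →₀ ℤ))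

/-- The adjacency on cells along which the support of a connected chain is connected. -/
def Overlap (s s' : S) : Prop :=
  ¬ Disjoint (d (single s 1)).support (d (single s' 1)).support

def nbhd (X : Set S) : Set S := X ∪ {s' | ∃ s ∈ X, Overlap d s s'}

lemma subset_nbhd (X : Set S) : X ⊆ nbhd d X := Set.subset_union_left

lemma nbhd_mono : Monotone (nbhd d) := by
  intro X Y h
  refine Set.union_subset_union h ?_
  rintro s' ⟨s, hs, hss'⟩
  exact ⟨s, h hs, hss'⟩

lemma iterate_nbhd_mono {X Y : Set S} (hXY : X ⊆ Y) {k m : ℕ} (hkm : k ≤ m) :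
    (nbhd d)^[k] X ⊆ (nbhd d)^[m] Y :=
  ((nbhd_mono d).iterate k hXY).trans (Function.monotone_iterate_of_id_le (subset_nbhd d) hkm Y)

lemma finite_nbhd (hloc : ∀ t : T, {s : S | t ∈ (d (single s 1)).support}.Finite)
    {X : Set S} (hX : X.Finite) : (nbhd d X).Finite := by
  refine hX.union (Set.Finite.subset (hX.biUnion fun s _ =>
    (d (single s 1)).support.finite_toSet.biUnion fun t _ => hloc t) ?_)
  rintro s' ⟨s, hs, hss'⟩
  obtain ⟨t, ht, ht'⟩ := not_disjoint_iff.mp hss'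
  exact Set.mem_biUnion hs (Set.mem_biUnion ht ht')

lemma finite_iterate_nbhd (hloc : ∀ t : T, {s : S | t ∈ (d (single s 1)).support}.Finite)
    {X : Set S} (hX : X.Finite) (k : ℕ) : ((nbhd d)^[k] X).Finite := by
  induction k with
  | zero => exact hX
  | succ k ih => rw [Function.iterate_succ_apply']; exact finite_nbhd d hloc ih

lemma support_map_subset_biUnion [DecidableEq T] (B : S →₀ ℤ) :
    (d B).support ⊆ B.support.biUnion fun s => (d (single s 1)).support := by
  conv_lhs => rw [← B.sum_single, map_finsuppSum]
  refine support_sum.trans (biUnion_mono fun s _ => ?_)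
  rw [← smul_single_one, map_smul]
  exact support_smul

/-- If no overlap leaves `U`, the restriction of `A` to `U` is a component of `A`. -/
lemma Connected.support_subset_of_closed {A : S →₀ ℤ} (hA : Connected d A) {U : Set S}
    (hU : ∀ s ∈ U, ∀ s' ∈ A.support, Overlap d s s' → s' ∈ U)
    (hne : ∃ s ∈ A.support, s ∈ U) : ↑A.support ⊆ U := by
  classical
  set B := A.filter (· ∈ U)
  set C := A.filter (· ∉ U)
  have hBC : B + C = A := filter_add_filter_not A _
  have hdisj : Disjoint B.support C.support := by
    simpa [B, C, support_filter] using disjoint_filter_filter_not A.support A.support (· ∈ U)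
  have hdisj' : Disjoint (d B).support (d C).support := by
    refine disjoint_of_subset_left (support_map_subset_biUnion d B)
      (disjoint_of_subset_right (support_map_subset_biUnion d C) ?_)
    simp only [disjoint_biUnion_left, disjoint_biUnion_right, B, C, support_filter, mem_filter]
    intro s ⟨hs, hsU⟩ s' ⟨_, hs'U⟩
    by_contra h
    exact hsU (hU s' hs'U s hs h)
  have hcomp : Component d B A := by
    refine ⟨hBC ▸ subchain_add_of_disjoint hdisj, ?_⟩
    rw [← hBC, map_add]
    exact subchain_add_of_disjoint hdisj'
  have hBsupp : B.support = A.support.filter (· ∈ U) := support_filter _ _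
  rcases hA B hcomp with hB | hB
  · obtain ⟨s, hs, hsU⟩ := hne
    rw [hB, support_zero, eq_comm, filter_eq_empty_iff] at hBsupp
    exact (hBsupp hs hsU).elim
  · rw [hB, eq_comm, filter_eq_self] at hBsupp
    exact hBsupp

lemma Connected.support_subset_iterate_nbhd {A : S →₀ ℤ} (hA : Connected d A) {σ : S}
    (hσ : σ ∈ A.support) : ↑A.support ⊆ (nbhd d)^[#A.support] {σ} := by
  classical
  obtain ⟨k, hk, hstable⟩ := exists_le_card_succ_eq_of_monotone
    (f := fun k => A.support.filter (· ∈ (nbhd d)^[k] {σ}))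
    (fun _ _ hij => monotone_filter_right _ fun _ _ h => iterate_nbhd_mono d le_rfl hij h)
    (fun _ => filter_subset _ _)
  have hσk : σ ∈ (nbhd d)^[k] {σ} := iterate_nbhd_mono d le_rfl k.zero_le (Set.mem_singleton σ)
  refine (hA.support_subset_of_closed d ?_ ⟨σ, hσ, hσk⟩).trans (iterate_nbhd_mono d le_rfl hk)
  intro s hs s' hs' hss'
  have : s' ∈ A.support.filter (· ∈ (nbhd d)^[k + 1] {σ}) := by
    rw [mem_filter, Function.iterate_succ_apply']
    exact ⟨hs', Or.inr ⟨s, hs, hss'⟩⟩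
  rw [hstable] at this
  exact (mem_filter.mp this).2

end Overlap

section Action

attribute [local instance] Finsupp.comapDistribMulAction

variable {G S T : Type*} [Group G] [MulAction G S]

lemma chainSMul_eq_smul (g : G) (A : S →₀ ℤ) : chainSMul g A = g • A := rfl

lemma vol_smul (g : G) (A : S →₀ ℤ) : vol (g • A) = vol A :=
  sum_mapDomain_index_inj (MulAction.injective g)

lemma Subchain.smul {B A : S →₀ ℤ} (h : Subchain B A) (g : G) : Subchain (g • B) (g • A) := by
  rw [Subchain, ← smul_sub, vol_smul, vol_smul, vol_smul]
  exact h

lemma Connected.smul [MulAction G T] {d : (S →₀ ℤ) →ₗ[ℤ] (T →₀ ℤ)}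
    (hequiv : ∀ (g : G) (A : S →₀ ℤ), d (g • A) = g • d A) {A : S →₀ ℤ} (hA : Connected d A)
    (g : G) : Connected d (g • A) := by
  intro B ⟨hB, hdB⟩
  have hc : Component d (g⁻¹ • B) A := by
    refine ⟨by simpa using hB.smul g⁻¹, ?_⟩
    simpa [hequiv] using hdB.smul g⁻¹
  rcases hA _ hc with h | h
  · left
    rw [← smul_inv_smul g B, h, smul_zero]
  · right
    rw [← h, smul_inv_smul]

end Action

/-- If a group `G` acts on `S` and `T` with `d` equivariant, the action on `S` has
finitely many orbits, and `d` is locally finite, then up to the `G`-action there are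
only finitely many connected chains of volume at most `n`. -/
theorem finitely_many_connected_chains_up_to_action
    {G S T : Type*} [Group G] [MulAction G S] [MulAction G T]
    (d : (S →₀ ℤ) →ₗ[ℤ] (T →₀ ℤ))
    (hequiv : ∀ (g : G) (A : S →₀ ℤ), d (chainSMul g A) = chainSMul g (d A))
    (horb : ∃ Sig : Finset S, ∀ s : S, ∃ g : G, ∃ σ ∈ Sig, s = g • σ)
    (hloc : ∀ t : T, {s : S | t ∈ (d (Finsupp.single s 1)).support}.Finite)
    (n : ℕ) :
    ∃ 𝒜 : Finset (S →₀ ℤ), ∀ A : S →₀ ℤ, Connected d A → vol A ≤ n →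
      ∃ g : G, ∃ A₀ ∈ 𝒜, A = chainSMul g A₀ := by
  classical
  let := Finsupp.comapDistribMulAction (G := G) (α := S) (M := ℤ)
  let := Finsupp.comapDistribMulAction (G := G) (α := T) (M := ℤ)
  simp only [chainSMul_eq_smul] at hequiv ⊢
  obtain ⟨Sig, hSig⟩ := horb
  set K := (finite_iterate_nbhd d hloc Sig.finite_toSet n).toFinset
  refine ⟨K.finsupp fun _ => Icc (-n : ℤ) n, fun A hA hvol => ?_⟩
  obtain ⟨g, hg⟩ : ∃ g : G, ↑(g⁻¹ • A).support ⊆ (nbhd d)^[n] Sig := by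
    obtain h0 | ⟨s, hs⟩ := A.support.eq_empty_or_nonempty
    · exact ⟨1, by simp [h0]⟩
    obtain ⟨g, σ, hσ, rfl⟩ := hSig s
    have hσA : σ ∈ (g⁻¹ • A).support := by simpa [comapSMul_apply] using hs
    refine ⟨g, ((hA.smul hequiv g⁻¹).support_subset_iterate_nbhd d hσA).trans
      (iterate_nbhd_mono d (by simpa using hσ) ?_)⟩
    exact (card_support_le_vol _).trans (vol_smul g⁻¹ A ▸ hvol)
  refine ⟨g, g⁻¹ • A, mem_finsupp_Icc_of_vol_le ?_ (vol_smul g⁻¹ A ▸ hvol),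
    (smul_inv_smul g A).symm⟩
  simpa [K, ← coe_subset] using hg
end
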